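/- arXiv:2504.02718 — 3 statements merged into one kernel-verified Lean document; each statement's English description precedes it below -/
import Mathlib

section
/- Let f^ext : ℝ^{n+1} → ℝ^{n+1} be a C¹ quasi-homogeneous vector field of type α^ext = (0,α₁,…,αₙ) and order k+1 (with k > 0), and suppose (t, Y₀) ∈ ℝ^{n+1} satisfies the balance law −(1/k) Λ^ext_α (t, Y₀)ᵀ + f^ext_{α,k}(t, Y₀) = 0, where Λ^ext_α = diag(0,α₁,…,αₙ). Then the matrix A^ext = −(1/k) Λ^ext_α + Df^ext_{α,k}(t, Y₀) has eigenvalue 1 with eigenvector v^ext_{0,α} = Λ^ext_α (t, Y₀)ᵀ = (0, α₁Y₀,₁, …, αₙY₀,ₙ)ᵀ, i.e. A^ext v^ext_{0,α} = v^ext_{0,α}; this requires Y₀ ≠ 0 so that the eigenvector is nonzero. -/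
/-- The blow-up power-determining matrix `A^ext = -(1/k)Λ^ext_α + Df^ext_{α,k}(t,Y₀)`
at a nontrivial root of the balance law has eigenvalue `1` with eigenvector
`v^ext_{0,α} = Λ^ext_α (t,Y₀)ᵀ`. -/
theorem stmt_3 (n : ℕ) (α : Fin (n + 1) → ℕ) (hα0 : α 0 = 0)
    (k : ℝ) (hk : 0 < k)
    (f : (Fin (n + 1) → ℝ) → (Fin (n + 1) → ℝ)) (hdiff : Differentiable ℝ f)
    (hqh : ∀ s : ℝ, 0 < s → ∀ y : Fin (n + 1) → ℝ, ∀ i,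
      f (fun j => s ^ (α j) * y j) i = s ^ (k + (α i : ℝ)) * f y i)
    (z : Fin (n + 1) → ℝ)
    (hY₀ : ∃ i, i ≠ 0 ∧ z i ≠ 0)
    (hbalance : ∀ i, -(1 / k) * (α i : ℝ) * z i + f z i = 0) :
    ∀ i, -(1 / k) * ((α i : ℝ) * ((α i : ℝ) * z i))
        + fderiv ℝ f z (fun j => (α j : ℝ) * z j) i
      = (α i : ℝ) * z i := by
  intro i
  -- the curve s ↦ (s^{α j} z j)
  set c : ℝ → (Fin (n + 1) → ℝ) := fun s j => s ^ (α j) * z j with hc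
  have hc1 : c 1 = z := by funext j; simp [hc]
  -- derivative of the curve at 1
  have hcurve : HasDerivAt c (fun j => (α j : ℝ) * z j) 1 := by
    rw [hasDerivAt_pi]
    intro j
    have := (hasDerivAt_pow (α j) (1 : ℝ)).mul_const (z j)
    simpa using this
  -- derivative of f along the curve
  have hF : HasFDerivAt f (fderiv ℝ f z) (c 1) := by
    rw [hc1]; exact (hdiff z).hasFDerivAt
  have hcomp : HasDerivAt (fun s => f (c s)) (fderiv ℝ f z (fun j => (α j : ℝ) * z j)) 1 :=
    hF.comp_hasDerivAt 1 hcurve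
  have hcompi : HasDerivAt (fun s => f (c s) i)
      (fderiv ℝ f z (fun j => (α j : ℝ) * z j) i) 1 := hasDerivAt_pi.1 hcomp i
  -- the function equals s ↦ s^(k+αᵢ) * f z i near 1
  have heq : (fun s => f (c s) i) =ᶠ[nhds (1 : ℝ)]
      (fun s => s ^ (k + (α i : ℝ)) * f z i) := by
    filter_upwards [eventually_gt_nhds (zero_lt_one)] with s hs
    exact hqh s hs z i
  have hrpow : HasDerivAt (fun s : ℝ => s ^ (k + (α i : ℝ)) * f z i)
      ((k + (α i : ℝ)) * f z i) 1 := by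
    have := (Real.hasDerivAt_rpow_const (x := (1 : ℝ)) (p := k + (α i : ℝ))
      (Or.inl one_ne_zero)).mul_const (f z i)
    simpa [Real.one_rpow] using this
  have hcompi' : HasDerivAt (fun s => f (c s) i) ((k + (α i : ℝ)) * f z i) 1 :=
    hrpow.congr_of_eventuallyEq heq
  have key : fderiv ℝ f z (fun j => (α j : ℝ) * z j) i = (k + (α i : ℝ)) * f z i :=
    hcompi.unique hcompi'
  have hb : f z i = (1 / k) * (α i : ℝ) * z i := by
    have := hbalance i; linarith
  rw [key, hb]
  field_simp
  ring
end

section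
/- Fix a ∈ ℝ with a < −1/3 and A = 3/(4(−1−3a)). The 4×4 matrix M = [[−1/2, 1, 0, 0],[−5A−6Aa, −3/2, −9Aa, 0],[0, 0, −1/2, 1],[−9Aa, 0, −5A−6Aa, −3/2]] has characteristic polynomial ((λ+1/2)(λ+3/2) + 5A + 15Aa)·((λ+1/2)(λ+3/2) + 5A − 3Aa), and its eigenvalues are 1, −3, and −1 ± √((3a−8)/(2(−1−3a))); the last two are complex conjugate with real part −1. -/
/-- Characteristic polynomial and eigenvalues of the lower-right 4×4 block of
the blow-up power-determining matrix of the `k = 2` Hamiltonian system: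
eigenvalues are `1`, `-3` and `-1 ± √((3a-8)/(2(-1-3a)))`, the last two being
complex conjugate with real part `-1`. -/
theorem stmt_15 (a : ℝ) (ha : a < -(1 / 3)) (A : ℝ)
    (hA : A = 3 / (4 * (-1 - 3 * a)))
    (d : ℝ) (hd : d = (3 * a - 8) / (2 * (-1 - 3 * a)))
    (M : Matrix (Fin 4) (Fin 4) ℂ)
    (hM : M = !![(-(1 / 2) : ℂ), 1, 0, 0;
                 ((-(5 * A) - 6 * A * a : ℝ) : ℂ), -(3 / 2), ((-(9 * A * a) : ℝ) : ℂ), 0;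
                 0, 0, -(1 / 2), 1;
                 ((-(9 * A * a) : ℝ) : ℂ), 0, ((-(5 * A) - 6 * A * a : ℝ) : ℂ), -(3 / 2)]) :
    (∀ lam : ℂ, (lam • (1 : Matrix (Fin 4) (Fin 4) ℂ) - M).det
        = ((lam + 1 / 2) * (lam + 3 / 2) + ((5 * A + 15 * A * a : ℝ) : ℂ))
          * ((lam + 1 / 2) * (lam + 3 / 2) + ((5 * A - 3 * A * a : ℝ) : ℂ))) ∧
    d < 0 ∧
    spectrum ℂ M
      = {1, -3, -1 + Complex.I * ((Real.sqrt (-d) : ℝ) : ℂ),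
          -1 - Complex.I * ((Real.sqrt (-d) : ℝ) : ℂ)} ∧
    (starRingEnd ℂ) (-1 + Complex.I * ((Real.sqrt (-d) : ℝ) : ℂ))
        = -1 - Complex.I * ((Real.sqrt (-d) : ℝ) : ℂ) ∧
    (-1 + Complex.I * ((Real.sqrt (-d) : ℝ) : ℂ)).re = -1 := by
  have hden : (-1 - 3 * a) > 0 := by linarith
  have hden' : (-1 - 3 * a) ≠ 0 := ne_of_gt hden
  have hdet : ∀ lam : ℂ, (lam • (1 : Matrix (Fin 4) (Fin 4) ℂ) - M).det
        = ((lam + 1 / 2) * (lam + 3 / 2) + ((5 * A + 15 * A * a : ℝ) : ℂ))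
          * ((lam + 1 / 2) * (lam + 3 / 2) + ((5 * A - 3 * A * a : ℝ) : ℂ)) := by
    intro lam
    subst hM
    simp [Matrix.det_succ_row_zero, Fin.sum_univ_succ, Fin.succAbove, Matrix.smul_apply, Matrix.one_apply]
    ring
  have hdneg : d < 0 := by
    rw [hd]
    apply div_neg_of_neg_of_pos <;> nlinarith
  have h1 : (5 * A + 15 * A * a : ℝ) = -(15 / 4) := by
    rw [hA]; field_simp; ring
  have h2 : (5 * A - 3 * A * a : ℝ) = 1 / 4 - d := by
    rw [hA, hd]; field_simp; ring
  set s : ℝ := Real.sqrt (-d) with hs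
  have hs2 : (s : ℂ) ^ 2 = (-d : ℝ) := by
    norm_cast
    exact Real.sq_sqrt (by linarith)
  refine ⟨hdet, hdneg, ?_, ?_, ?_⟩
  · ext lam
    have hmem : lam ∈ spectrum ℂ M ↔
        (lam • (1 : Matrix (Fin 4) (Fin 4) ℂ) - M).det = 0 := by
      rw [spectrum.mem_iff, Algebra.algebraMap_eq_smul_one,
        Matrix.isUnit_iff_isUnit_det, isUnit_iff_ne_zero, not_ne_iff]
    rw [hmem, hdet lam]
    have hfact : ((lam + 1 / 2) * (lam + 3 / 2) + ((5 * A + 15 * A * a : ℝ) : ℂ))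
          * ((lam + 1 / 2) * (lam + 3 / 2) + ((5 * A - 3 * A * a : ℝ) : ℂ))
        = (lam - 1) * (lam - (-3)) * (lam - (-1 + Complex.I * s)) * (lam - (-1 - Complex.I * s)) := by
      rw [h1, h2]
      push_cast
      have hsd : (s : ℂ) ^ 2 = -(d : ℂ) := by rw [hs2]; push_cast; ring
      linear_combination ((lam + 1/2) * (lam + 3/2) - 15/4) * ((s:ℂ)^2 * Complex.I_sq - hsd)
    rw [hfact]
    simp only [mul_eq_zero, sub_eq_zero, Set.mem_insert_iff, Set.mem_singleton_iff]
    tauto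
  · simp [map_add, map_mul, Complex.conj_I, Complex.conj_ofReal]
    ring
  · simp
end

section
/- Let a < −1/2 and set x₁ = x₃ = [ (1/2)·B·(B+1)^{−1} ]^{1/4} and x₂ = x₄ = [2(B+1)]^{−1/2}, where B = −2/(1+2a). Then (x₁,x₂,x₃,x₄) lies on the horizon x₁⁴ + x₂² + x₃⁴ + x₄² = 1, and the quantity C* = 2x₁³x₂ − x₁³x₂(1+2a) = x₁³x₂(1−2a) equals √( |1+2a| / (2√(1−2a)) ). -/
lemma pow4_inj_aux {a b : ℝ} (ha : 0 ≤ a) (hb : 0 ≤ b) (h : a ^ 4 = b ^ 4) : a = b := by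
  have h2 : a ^ 2 = b ^ 2 := by nlinarith [sq_nonneg a, sq_nonneg b, sq_nonneg (a ^ 2 + b ^ 2), sq_nonneg (a ^ 2 - b ^ 2)]
  nlinarith [sq_nonneg (a - b), sq_nonneg (a + b)]

/-- The equilibrium `x*` lies on the horizon `x₁⁴ + x₂² + x₃⁴ + x₄² = 1` and
`C* = 2x₁³x₂ - x₁³x₂(1+2a) = x₁³x₂(1-2a) = √(|1+2a|/(2√(1-2a)))`. -/
theorem stmt_18 (a : ℝ) (ha : a < -(1 / 2)) (B : ℝ)
    (hB : B = -2 / (1 + 2 * a))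
    (x₁ x₂ x₃ x₄ : ℝ)
    (hx₁ : x₁ = ((1 / 2) * B * (B + 1)⁻¹) ^ ((1 : ℝ) / 4))
    (hx₂ : x₂ = (2 * (B + 1)) ^ (-(1 : ℝ) / 2))
    (hx₃ : x₃ = x₁) (hx₄ : x₄ = x₂) :
    x₁ ^ 4 + x₂ ^ 2 + x₃ ^ 4 + x₄ ^ 2 = 1 ∧
    2 * x₁ ^ 3 * x₂ - x₁ ^ 3 * x₂ * (1 + 2 * a) = x₁ ^ 3 * x₂ * (1 - 2 * a) ∧
    x₁ ^ 3 * x₂ * (1 - 2 * a)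
      = Real.sqrt (|1 + 2 * a| / (2 * Real.sqrt (1 - 2 * a))) := by
  have h2a : 1 + 2 * a < 0 := by linarith
  have hne : (1 + 2 * a) ≠ 0 := ne_of_lt h2a
  have hc : (0 : ℝ) < 1 - 2 * a := by linarith
  have hv : (0 : ℝ) < -(1 + 2 * a) := by linarith
  -- the base of x₁
  have hne2 : (-(1 + 2 * a)) ≠ 0 := ne_of_gt hv
  have hne3 : (-1 - a * 2 : ℝ) ≠ 0 := by intro h; exact hne (by linarith)
  have ht : (1 / 2) * B * (B + 1)⁻¹ = (1 - 2 * a)⁻¹ := by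
    have hB1 : B + 1 = (1 - 2 * a) / (-(1 + 2 * a)) := by
      rw [hB, div_add' _ _ _ hne, div_eq_div_iff hne hne2]; ring
    rw [hB1, hB, inv_div]
    field_simp [hne, hc.ne']
  have hs : 2 * (B + 1) = 2 * (1 - 2 * a) / (-(1 + 2 * a)) := by
    rw [hB, eq_div_iff hne2]; field_simp; ring
  have hspos : (0 : ℝ) < 2 * (B + 1) := by
    rw [hs]; positivity
  have hx1nonneg : 0 ≤ x₁ := by
    rw [hx₁]; exact Real.rpow_nonneg (by rw [ht]; positivity) _
  have hx2nonneg : 0 ≤ x₂ := by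
    rw [hx₂]; exact Real.rpow_nonneg hspos.le _
  have hx14 : x₁ ^ 4 = (1 - 2 * a)⁻¹ := by
    rw [hx₁, ← Real.rpow_natCast (_ ^ _) 4, ← Real.rpow_mul (by rw [ht]; positivity)]
    norm_num [ht]
  have hx22 : x₂ ^ 2 = -(1 + 2 * a) / (2 * (1 - 2 * a)) := by
    rw [hx₂, ← Real.rpow_natCast (_ ^ _) 2, ← Real.rpow_mul hspos.le]
    norm_num [hs, Real.rpow_neg_one]
  refine ⟨?_, by ring, ?_⟩
  · rw [hx₃, hx₄, hx14, hx22]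
    field_simp [hc.ne']
    ring
  · set L := x₁ ^ 3 * x₂ * (1 - 2 * a) with hL
    have hLnonneg : 0 ≤ L := by
      apply mul_nonneg (mul_nonneg (pow_nonneg hx1nonneg 3) hx2nonneg) hc.le
    have hargnonneg : 0 ≤ |1 + 2 * a| / (2 * Real.sqrt (1 - 2 * a)) := by positivity
    have hL4 : L ^ 4 = (-(1 + 2 * a)) ^ 2 / (4 * (1 - 2 * a)) := by
      have : L ^ 4 = (x₁ ^ 4) ^ 3 * (x₂ ^ 2) ^ 2 * (1 - 2 * a) ^ 4 := by ring
      rw [this, hx14, hx22]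
      field_simp
      ring
    have hR4 : (Real.sqrt (|1 + 2 * a| / (2 * Real.sqrt (1 - 2 * a)))) ^ 4
        = (-(1 + 2 * a)) ^ 2 / (4 * (1 - 2 * a)) := by
      have h1 : (Real.sqrt (|1 + 2 * a| / (2 * Real.sqrt (1 - 2 * a)))) ^ 4
          = (|1 + 2 * a| / (2 * Real.sqrt (1 - 2 * a))) ^ 2 := by
        rw [show (4 : ℕ) = 2 * 2 by rfl, pow_mul, Real.sq_sqrt hargnonneg]
      rw [h1, div_pow, mul_pow, Real.sq_sqrt hc.le, sq_abs]
      ring_nf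
    exact pow4_inj_aux hLnonneg (Real.sqrt_nonneg _) (hL4.trans hR4.symm)
end
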